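/- arXiv:2310.09597 — 3 statements merged into one kernel-verified Lean document; each statement's English description precedes it below -/
import Mathlib

section
/- Maxima and welfare gap in the lower-bound family: Fix λ ∈ (0,1). For every ε ∈ [−1,1], the expected welfare W^ε of μ^ε satisfies max_{x ∈ (1/2, 3/4]} W^ε(x) = W^ε(3/4), max_{x ∈ [0, 1/2]} W^ε(x) = W^ε(1/4), max_{x ∈ (3/4, 1]} W^ε(x) = W^ε(1), and W^ε(1) − W^ε(1/4) = (λ·b/4)·ε. -/
open Set MeasureTheory

/-- Demand function of a Borel probability measure `μ` on `[0,1]`: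
`D_μ(x) = μ({v : v ≥ x})`. -/
noncomputable def Dem (μ : Measure ℝ) (x : ℝ) : ℝ := (μ {v | x ≤ v}).toReal

/-- Expected social welfare: `W_μ(x) = x·D_μ(x) + λ·∫_x^1 D_μ(t) dt`. -/
noncomputable def EW (lam : ℝ) (μ : Measure ℝ) (x : ℝ) : ℝ :=
  x * Dem μ x + lam * ∫ t in x..1, Dem μ t

/-- `a(λ)` from the lower-bound construction. -/
noncomputable def aC (lam : ℝ) : ℝ :=
  (1 - lam) * (136 - 99 * lam) / (2 * (4 - 3 * lam) * (24 - 17 * lam))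

/-- `b(λ)` from the lower-bound construction. -/
noncomputable def bC (lam : ℝ) : ℝ := (1 - lam) / (2 * (24 - 17 * lam))

/-- The measure `μ^ε` on `[0,1]` with atoms at `1/4, 1/2, 3/4, 1` of masses
`a, (1+ε)b, (1−ε)b, 1−a−2b` respectively. -/
noncomputable def muEps (lam ε : ℝ) : Measure ℝ :=
  ENNReal.ofReal (aC lam) • Measure.dirac (1/4)
    + ENNReal.ofReal ((1 + ε) * bC lam) • Measure.dirac (1/2)
    + ENNReal.ofReal ((1 - ε) * bC lam) • Measure.dirac (3/4)
    + ENNReal.ofReal (1 - aC lam - 2 * bC lam) • Measure.dirac 1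

/-!
The demand of `μ^ε` is a step function, constant on `(-∞, 1/4]`, `(1/4, 1/2]`, `(1/2, 3/4]` and
`(3/4, 1]`. Where the demand is a constant `d`, `W` is affine with slope `(1 - λ) d ≥ 0`, so on
each piece `W` is maximal at the right endpoint; on `[0, 1/2]` it remains to check
`W(1/2) ≤ W(1/4)`, a polynomial inequality in `λ`. The gap is the sum of the increments of `W`
over the three upper pieces, and `a` is chosen exactly so that it vanishes at `ε = 0`.
-/

section Welfare

lemma dem_nonneg (μ : Measure ℝ) (x : ℝ) : 0 ≤ Dem μ x := ENNReal.toReal_nonneg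

lemma integral_dem_of_eqOn_Ioc {μ : Measure ℝ} {x p d : ℝ} (hxp : x ≤ p)
    (hD : ∀ t ∈ Ioc x p, Dem μ t = d) :
    ∫ t in x..p, Dem μ t = (p - x) * d := by
  rw [intervalIntegral.integral_congr_ae (g := fun _ => d), intervalIntegral.integral_const,
    smul_eq_mul]
  filter_upwards with t ht
  exact hD t (uIoc_of_le hxp ▸ ht)

variable {μ : Measure ℝ} [IsFiniteMeasure μ]

lemma dem_antitone : Antitone (Dem μ) := fun _ _ hxy =>
  ENNReal.toReal_mono (measure_ne_top μ _) (measure_mono fun _ (hv : _ ≤ _) => hxy.trans hv)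

lemma dem_add (ν : Measure ℝ) [IsFiniteMeasure ν] (x : ℝ) :
    Dem (μ + ν) x = Dem μ x + Dem ν x :=
  ENNReal.toReal_add (measure_ne_top μ _) (measure_ne_top ν _)

lemma dem_ofReal_smul_dirac {c : ℝ} (hc : 0 ≤ c) (p x : ℝ) :
    Dem (ENNReal.ofReal c • Measure.dirac p) x = if x ≤ p then c else 0 := by
  have hIci : {v : ℝ | x ≤ v} = Ici x := rfl
  by_cases h : x ≤ p <;>
    simp [Dem, hIci, Measure.dirac_apply' _ measurableSet_Ici, h, hc]

lemma EW_sub_EW_of_dem_eqOn_Ioc (lam : ℝ) {x p d : ℝ} (hxp : x ≤ p)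
    (hD : ∀ t ∈ Ioc x p, Dem μ t = d) :
    EW lam μ x - EW lam μ p = x * Dem μ x - p * Dem μ p + lam * (p - x) * d := by
  have hsplit := intervalIntegral.integral_add_adjacent_intervals
    ((dem_antitone (μ := μ)).intervalIntegrable (μ := volume) (a := x) (b := p))
    ((dem_antitone (μ := μ)).intervalIntegrable (μ := volume) (a := p) (b := 1))
  rw [EW, EW, ← hsplit, integral_dem_of_eqOn_Ioc hxp hD]
  ring

lemma isMaxOn_EW_of_dem_eqOn_Ioc {lam q p d : ℝ} (hlam : lam ≤ 1)
    (hD : ∀ t ∈ Ioc q p, Dem μ t = d) : IsMaxOn (EW lam μ) (Ioc q p) p := by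
  intro x hx
  have hp : p ∈ Ioc q p := ⟨hx.1.trans_le hx.2, le_rfl⟩
  have hsub := EW_sub_EW_of_dem_eqOn_Ioc lam hx.2
    fun t ht => hD t ⟨hx.1.trans ht.1, ht.2⟩
  rw [hD x hx, hD p hp] at hsub
  have hd : 0 ≤ d := hD p hp ▸ dem_nonneg μ p
  show EW lam μ x ≤ EW lam μ p
  nlinarith [mul_nonneg (mul_nonneg (sub_nonneg.2 hlam) (sub_nonneg.2 hx.2)) hd]

end Welfare

instance (c p : ℝ) : IsFiniteMeasure (ENNReal.ofReal c • Measure.dirac p) :=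
  ⟨by simp⟩

section LowerBoundFamily

variable {lam : ℝ}

lemma aC_nonneg (hlam : lam ≤ 1) : 0 ≤ aC lam :=
  div_nonneg (mul_nonneg (by linarith) (by linarith))
    (mul_nonneg (mul_nonneg zero_le_two (by linarith)) (by linarith))

lemma bC_nonneg (hlam : lam ≤ 1) : 0 ≤ bC lam :=
  div_nonneg (by linarith) (by linarith)

lemma aC_add_two_mul_bC_le_one (hlam : lam ∈ Icc (0:ℝ) 1) : aC lam + 2 * bC lam ≤ 1 := by
  obtain ⟨h0, h1⟩ := hlam
  have hden : 0 < 2 * (4 - 3 * lam) * (24 - 17 * lam) := by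
    apply mul_pos (mul_pos two_pos _) <;> linarith
  have hsum : aC lam + 2 * bC lam =
      (1 - lam) * (144 - 105 * lam) / (2 * (4 - 3 * lam) * (24 - 17 * lam)) := by
    have h4 : 4 - lam * 3 ≠ 0 := by linarith
    have h24 : 24 - lam * 17 ≠ 0 := by linarith
    unfold aC bC
    field_simp
    ring
  rw [hsum, div_le_one hden]
  nlinarith

lemma one_sub_le_aC_mul (hlam : lam ∈ Icc (0:ℝ) 1) : 1 - lam ≤ aC lam * (2 - lam) := by
  obtain ⟨h0, h1⟩ := hlam
  have hden : 0 < 2 * (4 - 3 * lam) * (24 - 17 * lam) := by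
    apply mul_pos (mul_pos two_pos _) <;> linarith
  rw [aC, div_mul_eq_mul_div, le_div_iff₀ hden]
  nlinarith [mul_nonneg (sub_nonneg.2 h1) (by nlinarith : (0:ℝ) ≤ 80 - 54 * lam - 3 * lam ^ 2)]

lemma four_sub_mul_one_sub_aC_sub_two_mul_bC (h₁ : 4 - 3 * lam ≠ 0) (h₂ : 24 - 17 * lam ≠ 0) :
    (4 - 3 * lam) * (1 - aC lam - 2 * bC lam) = 1 + 3 * lam * bC lam := by
  have h₁' : 4 - lam * 3 ≠ 0 := by rwa [mul_comm]
  have h₂' : 24 - lam * 17 ≠ 0 := by rwa [mul_comm]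
  unfold aC bC
  field_simp
  ring

instance (lam ε : ℝ) : IsFiniteMeasure (muEps lam ε) := by
  unfold muEps
  infer_instance

variable {ε : ℝ} (hlam : lam ∈ Icc (0:ℝ) 1) (hε : ε ∈ Icc (-1:ℝ) 1)
include hlam hε

lemma dem_muEps (t : ℝ) :
    Dem (muEps lam ε) t =
      (if t ≤ 1/4 then aC lam else 0) + (if t ≤ 1/2 then (1 + ε) * bC lam else 0)
        + (if t ≤ 3/4 then (1 - ε) * bC lam else 0)
        + (if t ≤ 1 then 1 - aC lam - 2 * bC lam else 0) := by
  have hb := bC_nonneg hlam.2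
  simp only [muEps, dem_add, dem_ofReal_smul_dirac (aC_nonneg hlam.2),
    dem_ofReal_smul_dirac (mul_nonneg (by linarith [hε.1] : 0 ≤ 1 + ε) hb),
    dem_ofReal_smul_dirac (mul_nonneg (by linarith [hε.2] : 0 ≤ 1 - ε) hb),
    dem_ofReal_smul_dirac
      (by linarith [aC_add_two_mul_bC_le_one hlam] : 0 ≤ 1 - aC lam - 2 * bC lam)]

lemma dem_muEps_of_le_quarter {t : ℝ} (ht : t ≤ 1/4) : Dem (muEps lam ε) t = 1 := by
  rw [dem_muEps hlam hε, if_pos ht, if_pos (by linarith), if_pos (by linarith),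
    if_pos (by linarith)]
  ring

lemma dem_muEps_of_mem_Ioc_quarter_half {t : ℝ} (ht : t ∈ Ioc (1/4 : ℝ) (1/2)) :
    Dem (muEps lam ε) t = 1 - aC lam := by
  rw [dem_muEps hlam hε, if_neg (not_le.2 ht.1), if_pos ht.2, if_pos (by linarith [ht.2]),
    if_pos (by linarith [ht.2])]
  ring

lemma dem_muEps_of_mem_Ioc_half_threeQuarters {t : ℝ} (ht : t ∈ Ioc (1/2 : ℝ) (3/4)) :
    Dem (muEps lam ε) t = (1 - ε) * bC lam + (1 - aC lam - 2 * bC lam) := by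
  rw [dem_muEps hlam hε, if_neg (by linarith [ht.1]), if_neg (not_le.2 ht.1), if_pos ht.2,
    if_pos (by linarith [ht.2])]
  ring

lemma dem_muEps_of_mem_Ioc_threeQuarters_one {t : ℝ} (ht : t ∈ Ioc (3/4 : ℝ) 1) :
    Dem (muEps lam ε) t = 1 - aC lam - 2 * bC lam := by
  rw [dem_muEps hlam hε, if_neg (by linarith [ht.1]), if_neg (by linarith [ht.1]),
    if_neg (not_le.2 ht.1), if_pos ht.2]
  ring

end LowerBoundFamily

/-- Maxima and welfare gap in the lower-bound family: for `λ ∈ (0,1)` and `ε ∈ [−1,1]`,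
`max_{x∈(1/2,3/4]} W^ε(x) = W^ε(3/4)`, `max_{x∈[0,1/2]} W^ε(x) = W^ε(1/4)`,
`max_{x∈(3/4,1]} W^ε(x) = W^ε(1)`, and `W^ε(1) − W^ε(1/4) = (λb/4)·ε`. -/
theorem maxima_and_gap_lower_bound_family
    (lam : ℝ) (hlam : lam ∈ Ioo (0:ℝ) 1) (ε : ℝ) (hε : ε ∈ Icc (-1:ℝ) 1) :
    (⨆ x : Ioc (1/2 : ℝ) (3/4), EW lam (muEps lam ε) x.1)
        = EW lam (muEps lam ε) (3/4) ∧
    (⨆ x : Icc (0:ℝ) (1/2), EW lam (muEps lam ε) x.1)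
        = EW lam (muEps lam ε) (1/4) ∧
    (⨆ x : Ioc (3/4 : ℝ) 1, EW lam (muEps lam ε) x.1)
        = EW lam (muEps lam ε) 1 ∧
    EW lam (muEps lam ε) 1 - EW lam (muEps lam ε) (1/4) = lam * bC lam / 4 * ε := by
  have hlam' : lam ∈ Icc (0:ℝ) 1 := Ioo_subset_Icc_self hlam
  have hD₁ : ∀ t ∈ Ioc (-1 : ℝ) (1/4), Dem (muEps lam ε) t = 1 :=
    fun t ht => dem_muEps_of_le_quarter hlam' hε ht.2
  have hD₂ := fun t => dem_muEps_of_mem_Ioc_quarter_half (t := t) hlam' hε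
  have hD₃ := fun t => dem_muEps_of_mem_Ioc_half_threeQuarters (t := t) hlam' hε
  have hD₄ := fun t => dem_muEps_of_mem_Ioc_threeQuarters_one (t := t) hlam' hε
  have g₂ := EW_sub_EW_of_dem_eqOn_Ioc lam (by norm_num : (1/4 : ℝ) ≤ 1/2) hD₂
  have g₃ := EW_sub_EW_of_dem_eqOn_Ioc lam (by norm_num : (1/2 : ℝ) ≤ 3/4) hD₃
  have g₄ := EW_sub_EW_of_dem_eqOn_Ioc lam (by norm_num : (3/4 : ℝ) ≤ 1) hD₄
  rw [hD₁ _ (by norm_num), hD₂ _ (by norm_num)] at g₂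
  rw [hD₂ _ (by norm_num), hD₃ _ (by norm_num)] at g₃
  rw [hD₃ _ (by norm_num), hD₄ _ (by norm_num)] at g₄
  have hquarter : IsMaxOn (EW lam (muEps lam ε)) (Icc 0 (1/2)) (1/4) := by
    intro x hx
    rcases le_or_gt x (1/4) with h | h
    · exact isMaxOn_EW_of_dem_eqOn_Ioc hlam.2.le hD₁ ⟨by linarith [hx.1], h⟩
    · have hhalf : EW lam (muEps lam ε) x ≤ EW lam (muEps lam ε) (1/2) :=
        isMaxOn_EW_of_dem_eqOn_Ioc hlam.2.le hD₂ ⟨h, hx.2⟩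
      show EW lam (muEps lam ε) x ≤ EW lam (muEps lam ε) (1/4)
      linarith [one_sub_le_aC_mul hlam']
  refine ⟨(isMaxOn_EW_of_dem_eqOn_Ioc hlam.2.le hD₃).iSup_eq ?_, hquarter.iSup_eq ?_,
    (isMaxOn_EW_of_dem_eqOn_Ioc hlam.2.le hD₄).iSup_eq ?_, ?_⟩
  · norm_num
  · norm_num
  · norm_num
  · have hid := four_sub_mul_one_sub_aC_sub_two_mul_bC (lam := lam)
      (by linarith [hlam.2]) (by linarith [hlam.2])
    linear_combination -(g₂ + g₃ + g₄) + hid / 4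
end

section
/- Kullback–Leibler bound for the informative region: Fix λ ∈ (0,1) with a = a(λ) and b = b(λ) as in the lower-bound family. For every ε ∈ [0,1], log( (1−a−(1+ε)b) / (1−a−(1−ε)b) )·(1−a−(1+ε)b) + log( (a+(1+ε)b) / (a+(1−ε)b) )·(a+(1+ε)b) ≤ 4·b²·ε² / ( a·(1−a−2b) ). -/
open Set

/-! The left-hand side is bounded by the χ²-divergence, via `log t ≤ t - 1`; for Bernoulli laws
`p` and `q` this is `(p - q)² / (q (1 - q))`. Here `p - q = -2εb`, and `q (1 - q)` is at least
`a (1 - a - 2b)` because the mass `a + (1 - ε) b` of the second outcome lies in `[a, a + 2b]`. -/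

lemma log_div_mul_le {p q : ℝ} (hp : 0 < p) (hq : 0 < q) :
    Real.log (p / q) * p ≤ p ^ 2 / q - p :=
  calc Real.log (p / q) * p ≤ (p / q - 1) * p :=
        mul_le_mul_of_nonneg_right (Real.log_le_sub_one_of_pos (div_pos hp hq)) hp.le
    _ = p ^ 2 / q - p := by field_simp

lemma two_point_kl_le_chi_sq {p p' q q' : ℝ} (hp : 0 < p) (hp' : 0 < p') (hq : 0 < q)
    (hq' : 0 < q') (hpp' : p + p' = 1) (hqq' : q + q' = 1) :
    Real.log (p / q) * p + Real.log (p' / q') * p' ≤ (p - q) ^ 2 / (q * q') := by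
  have chi_sq : p ^ 2 / q - p + (p' ^ 2 / q' - p') = (p - q) ^ 2 / (q * q') := by
    obtain rfl : p' = 1 - p := by linarith
    obtain rfl : q' = 1 - q := by linarith
    field_simp
    ring
  linarith [log_div_mul_le hp hq, log_div_mul_le hp' hq']

lemma mul_one_sub_sub_le_mul {a c q q' : ℝ} (ha : 0 ≤ a) (hac : a + c ≤ 1)
    (hqq' : q + q' = 1) (hq' : q' ∈ Icc a (a + c)) :
    a * (1 - a - c) ≤ q * q' := by
  obtain rfl : q = 1 - q' := by linarith
  nlinarith [hq'.1, hq'.2]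

section Constants

variable {lam : ℝ}

lemma aC_pos (hlam : lam < 1) : 0 < aC lam := by
  unfold aC
  apply div_pos <;> nlinarith

lemma bC_pos (hlam : lam < 1) : 0 < bC lam := by
  unfold bC
  apply div_pos <;> linarith

lemma one_sub_aC_sub_two_mul_bC (hlam : lam < 1) :
    1 - aC lam - 2 * bC lam = (48 - 31 * lam - 3 * lam ^ 2) / (2 * (4 - 3 * lam) * (24 - 17 * lam)) := by
  have hD : 2 * (4 - 3 * lam) * (24 - 17 * lam) ≠ 0 := by
    have : 0 < 4 - 3 * lam := by linarith
    have : 0 < 24 - 17 * lam := by linarith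
    positivity
  have hE : 2 * (24 - 17 * lam) ≠ 0 := by linarith
  rw [aC, bC, eq_div_iff hD]
  linear_combination -div_mul_cancel₀ ((1 - lam) * (136 - 99 * lam)) hD
    - 2 * (4 - 3 * lam) * div_mul_cancel₀ (1 - lam) hE

lemma one_sub_aC_sub_two_mul_bC_pos (hlam : lam ∈ Ioo (0 : ℝ) 1) :
    0 < 1 - aC lam - 2 * bC lam := by
  obtain ⟨hl0, hl1⟩ := hlam
  rw [one_sub_aC_sub_two_mul_bC hl1]
  apply div_pos <;> nlinarith

end Constants

/-- Kullback–Leibler bound for the informative region: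
for `λ ∈ (0,1)` (with `a = a(λ)`, `b = b(λ)`) and every `ε ∈ [0,1]`,
`KL(Ber(1−a−(1+ε)b) ‖ Ber(1−a−(1−ε)b)) ≤ 4b²ε²/(a(1−a−2b))`. -/
theorem kl_bound_informative_region (lam : ℝ) (hlam : lam ∈ Ioo (0:ℝ) 1)
    (ε : ℝ) (hε : ε ∈ Icc (0:ℝ) 1) :
    Real.log ((1 - aC lam - (1 + ε) * bC lam) / (1 - aC lam - (1 - ε) * bC lam))
        * (1 - aC lam - (1 + ε) * bC lam)
      + Real.log ((aC lam + (1 + ε) * bC lam) / (aC lam + (1 - ε) * bC lam))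
        * (aC lam + (1 + ε) * bC lam)
      ≤ 4 * (bC lam) ^ 2 * ε ^ 2 / (aC lam * (1 - aC lam - 2 * bC lam)) := by
  obtain ⟨he0, he1⟩ := hε
  have ha := aC_pos hlam.2
  have hb := bC_pos hlam.2
  have hc := one_sub_aC_sub_two_mul_bC_pos hlam
  set a := aC lam
  set b := bC lam
  have hp : 0 < 1 - a - (1 + ε) * b := by nlinarith
  have hp' : 0 < a + (1 + ε) * b := by nlinarith
  have hq : 0 < 1 - a - (1 - ε) * b := by nlinarith
  have hq' : a + (1 - ε) * b ∈ Icc a (a + 2 * b) := ⟨by nlinarith, by nlinarith⟩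
  calc _ ≤ 4 * b ^ 2 * ε ^ 2 / ((1 - a - (1 - ε) * b) * (a + (1 - ε) * b)) := by
        convert two_point_kl_le_chi_sq hp hp' hq (ha.trans_le hq'.1) (by ring) (by ring) using 2
        ring
    _ ≤ 4 * b ^ 2 * ε ^ 2 / (a * (1 - a - 2 * b)) :=
        div_le_div_of_nonneg_left (by positivity) (by positivity)
          (mul_one_sub_sub_le_mul ha.le (by linarith) (by ring) hq')
end

section
/- Second-moment bound for Tempered Exp3 welfare estimates: Let K ∈ ℕ, γ ∈ (0,1], and λ ∈ [0,1], and let p = (p_1,…,p_{K+1}) be a probability vector with p_k ≥ γ/(K+1) for all k. Then ∑_{k=1}^{K+1} ((k−1)/K)² + (λ/K)² · ∑_{k=1}^{K+1} ∑_{k' = k+1}^{K+1} p_k / p_{k'} ≤ ((K+1)/K) · ( (2K+1)/6 + λ²/γ ). -/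
open Set Finset

lemma sum_sq_range_aux (n : ℕ) :
    ∑ i ∈ Finset.range (n + 1), (i : ℝ) ^ 2 = n * (n + 1) * (2 * n + 1) / 6 := by
  induction n with
  | zero => simp
  | succ n ih =>
    rw [Finset.sum_range_succ, ih]
    push_cast
    ring

/-- Second-moment bound for Tempered Exp3 welfare estimates: for `K ≥ 1`,
`γ ∈ (0,1]`, `λ ∈ [0,1]`, and a probability vector `p` on the `K+1` grid points
with `p_k ≥ γ/(K+1)` for all `k`,
`∑_k ((k−1)/K)² + (λ/K)²·∑_k ∑_{k' > k} p_k/p_{k'} ≤ ((K+1)/K)·((2K+1)/6 + λ²/γ)`. -/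
theorem second_moment_bound_tempered_exp3
    (K : ℕ) (hK : 1 ≤ K) (γ : ℝ) (hγ : γ ∈ Ioc (0:ℝ) 1)
    (lam : ℝ) (hlam : lam ∈ Icc (0:ℝ) 1)
    (p : Fin (K + 1) → ℝ)
    (hp_pos : ∀ k, 0 < p k) (hp_sum : ∑ k, p k = 1)
    (hp_lb : ∀ k, γ / (K + 1) ≤ p k) :
    (∑ k : Fin (K + 1), ((k : ℝ) / K) ^ 2)
      + (lam / K) ^ 2 *
        ∑ k : Fin (K + 1), ∑ k' ∈ Finset.univ.filter (fun k' => k < k'), p k / p k'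
      ≤ ((K : ℝ) + 1) / K * ((2 * K + 1) / 6 + lam ^ 2 / γ) := by
  have hγ0 : 0 < γ := hγ.1
  have hK0 : (0:ℝ) < K := by exact_mod_cast Nat.pos_of_ne_zero (by omega)
  -- First sum exact value
  have h1 : (∑ k : Fin (K + 1), ((k : ℝ) / K) ^ 2)
      = (K : ℝ) * (K + 1) * (2 * K + 1) / 6 / K ^ 2 := by
    rw [Fin.sum_univ_eq_sum_range (fun i => ((i : ℝ) / K) ^ 2)]
    have : ∀ i ∈ Finset.range (K + 1), ((i : ℝ) / K) ^ 2 = (i : ℝ) ^ 2 * (1 / K ^ 2) := by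
      intro i _; field_simp
    rw [Finset.sum_congr rfl this, ← Finset.sum_mul, sum_sq_range_aux]
    field_simp
  -- Bound on the double sum
  have hinv : ∀ k' : Fin (K + 1), 1 / p k' ≤ ((K : ℝ) + 1) / γ := by
    intro k'
    rw [div_le_div_iff₀ (hp_pos k') hγ0]
    have := hp_lb k'
    rw [div_le_iff₀ (by positivity : (0:ℝ) < (K : ℝ) + 1)] at this
    linarith [this]
  have h2 : (∑ k : Fin (K + 1), ∑ k' ∈ Finset.univ.filter (fun k' => k < k'), p k / p k')
      ≤ (K : ℝ) * ((K + 1) / γ) := by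
    have hstep : ∀ k : Fin (K + 1),
        (∑ k' ∈ Finset.univ.filter (fun k' => k < k'), p k / p k')
          ≤ (K : ℝ) * (((K : ℝ) + 1) / γ) * p k := by
      intro k
      have hb : ∀ k' ∈ Finset.univ.filter (fun k' => k < k'),
          p k / p k' ≤ ((K : ℝ) + 1) / γ * p k := by
        intro k' _
        have h := hinv k'
        have hpk := (hp_pos k).le
        calc p k / p k' = (1 / p k') * p k := by ring
          _ ≤ ((K : ℝ) + 1) / γ * p k := by
              exact mul_le_mul_of_nonneg_right h hpk
      calc (∑ k' ∈ Finset.univ.filter (fun k' => k < k'), p k / p k')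
          ≤ ∑ k' ∈ Finset.univ.filter (fun k' => k < k'), ((K : ℝ) + 1) / γ * p k :=
            Finset.sum_le_sum hb
        _ = ((Finset.univ.filter (fun k' => k < k')).card : ℝ) * (((K : ℝ) + 1) / γ * p k) := by
            rw [Finset.sum_const, nsmul_eq_mul]
        _ ≤ (K : ℝ) * (((K : ℝ) + 1) / γ * p k) := by
            apply mul_le_mul_of_nonneg_right _
              (mul_nonneg (by positivity) (hp_pos k).le)
            have hsub : (Finset.univ.filter (fun k' => k < k')) ⊆ Finset.univ.erase k := by
              intro k' hk'
              rw [Finset.mem_filter] at hk'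
              exact Finset.mem_erase.mpr ⟨(hk'.2).ne', Finset.mem_univ _⟩
            have hcard : (Finset.univ.filter (fun k' => k < k')).card ≤ K := by
              have := Finset.card_le_card hsub
              rwa [Finset.card_erase_of_mem (Finset.mem_univ k), Finset.card_univ,
                Fintype.card_fin, Nat.add_sub_cancel] at this
            exact_mod_cast hcard
        _ = (K : ℝ) * (((K : ℝ) + 1) / γ) * p k := by ring
    calc (∑ k : Fin (K + 1), ∑ k' ∈ Finset.univ.filter (fun k' => k < k'), p k / p k')
        ≤ ∑ k : Fin (K + 1), (K : ℝ) * (((K : ℝ) + 1) / γ) * p k :=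
          Finset.sum_le_sum (fun k _ => hstep k)
      _ = (K : ℝ) * (((K : ℝ) + 1) / γ) * ∑ k, p k := by rw [← Finset.mul_sum]
      _ = (K : ℝ) * ((K + 1) / γ) := by rw [hp_sum]; ring
  have hlam2 : (0:ℝ) ≤ (lam / K) ^ 2 := by positivity
  have := mul_le_mul_of_nonneg_left h2 hlam2
  rw [h1]
  have hfinal : (K : ℝ) * (K + 1) * (2 * K + 1) / 6 / K ^ 2
      + (lam / K) ^ 2 * ((K : ℝ) * ((K + 1) / γ))
      = ((K : ℝ) + 1) / K * ((2 * K + 1) / 6 + lam ^ 2 / γ) := by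
    field_simp
  linarith [this]
end
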